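/- arXiv:1803.09558 — 5 statements merged into one kernel-verified Lean document; each statement's English description precedes it below -/
import Mathlib

section
/- Let k be an algebraically closed field of characteristic p > 0 and let ℘ : k((t)) → k((t)) be the Artin–Schreier map ℘(f) = f^p - f. Then the composite of the inclusion of Δ_H := {Laurent polynomials with only terms of negative degree prime to p} into k((t)) with the quotient map k((t)) → k((t))/℘(k((t))) is a bijection. -/
/-!
Write `℘ h = h ^ p - h`; it is additive, so the claim is that `Δ_H ⊕ ℘(k((t))) = k((t))`.

Existence: a power series `P` is in `℘(k⟦t⟧)` because `X ^ p - X - P` has a root modulo `t`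
(as `k` is algebraically closed) which is simple (the derivative is `-1`), hence lifts by
Hensel's lemma. A polar monomial `c t⁻ⁿ` lies in `Δ_H` when `p ∤ n`, and when `n = p m` it
is congruent modulo `℘` to `c^{1/p} t⁻ᵐ`, so induction on `n` handles it.

Uniqueness: if `h` has negative order `v`, then `h ^ p - h` has order `p v` with a nonzero
coefficient there, which is not allowed in `Δ_H`; otherwise `h ^ p - h` has no polar part.
-/

section

open Polynomial

theorem Polynomial.degree_X_add_C_lt {R : Type*} [Ring R] {n : ℕ} (hn : 1 < n) (c : R) :
    (X + C c : R[X]).degree < n :=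
  (degree_add_le _ _).trans_lt <| max_lt (degree_X_le.trans_lt (by exact_mod_cast hn))
    (degree_C_le.trans_lt (by exact_mod_cast zero_lt_one.trans hn))

theorem IsAlgClosed.exists_pow_sub_self_eq {k : Type*} [Field k] [IsAlgClosed k] {n : ℕ}
    (hn : 1 < n) (c : k) : ∃ a : k, a ^ n - a = c := by
  have hdeg : (X ^ n - (X + C c) : k[X]).degree = n := by
    rw [degree_sub_eq_left_of_degree_lt] <;> rw [degree_X_pow]
    exact Polynomial.degree_X_add_C_lt hn c
  obtain ⟨a, ha⟩ :=
    IsAlgClosed.exists_root _ (by rw [hdeg]; exact_mod_cast (zero_lt_one.trans hn).ne')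
  refine ⟨a, ?_⟩
  simp only [IsRoot, eval_sub, eval_pow, eval_X, eval_add, eval_C] at ha
  linear_combination ha

theorem HenselianRing.exists_pow_char_sub_self_eq {R : Type*} [CommRing R] {p : ℕ} [CharP R p]
    (hp : 1 < p) {I : Ideal R} [HenselianRing R I] {b a₀ : R} (ha₀ : a₀ ^ p - a₀ - b ∈ I) :
    ∃ a : R, a ^ p - a = b := by
  obtain ⟨a, ha, -⟩ := HenselianRing.is_henselian (X ^ p - (X + C b))
    (monic_X_pow_sub (degree_X_add_C_lt hp b)) a₀ (by simpa [sub_sub] using ha₀)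
    (by simp [derivative_X_pow])
  refine ⟨a, ?_⟩
  simp only [IsRoot, eval_sub, eval_pow, eval_X, eval_add, eval_C] at ha
  linear_combination ha

end

theorem PowerSeries.exists_pow_char_sub_self_eq {k : Type*} [Field k] [IsAlgClosed k] {p : ℕ}
    [CharP k p] (hp : 1 < p) (b : PowerSeries k) : ∃ a : PowerSeries k, a ^ p - a = b := by
  have : CharP (PowerSeries k) p := charP_of_injective_algebraMap' k p
  obtain ⟨α, hα⟩ := IsAlgClosed.exists_pow_sub_self_eq hp (constantCoeff b)
  refine HenselianRing.exists_pow_char_sub_self_eq hp (I := Ideal.span {X}) (a₀ := C α) ?_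
  rw [Ideal.mem_span_singleton, X_dvd_iff]
  simp [hα]

open HahnSeries

theorem HahnSeries.leadingCoeff_pow {Γ R : Type*} [AddCommMonoid Γ] [LinearOrder Γ]
    [IsOrderedCancelAddMonoid Γ] [Semiring R] [NoZeroDivisors R] (x : HahnSeries Γ R) (n : ℕ) :
    (x ^ n).leadingCoeff = x.leadingCoeff ^ n := by
  induction n with
  | zero => simp [leadingCoeff_one]
  | succ n ih => rw [pow_succ, leadingCoeff_mul, ih, pow_succ]

theorem HahnSeries.coeff_pow_nsmul_order {Γ R : Type*} [AddCommMonoid Γ] [LinearOrder Γ]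
    [IsOrderedCancelAddMonoid Γ] [Semiring R] [NoZeroDivisors R] (x : HahnSeries Γ R) (n : ℕ) :
    (x ^ n).coeff (n • x.order) = x.leadingCoeff ^ n := by
  rw [← leadingCoeff_pow, leadingCoeff_eq, order_pow]

def artinSchreier (R : Type*) [CommRing R] (p : ℕ) [ExpChar R p] : R →+ R :=
  (frobenius R p).toAddMonoidHom - AddMonoidHom.id R

@[simp]
theorem artinSchreier_apply {R : Type*} [CommRing R] (p : ℕ) [ExpChar R p] (x : R) :
    artinSchreier R p x = x ^ p - x := rfl

namespace LaurentSeries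

theorem exists_coe_powerSeries_eq {R : Type*} [Semiring R] {f : LaurentSeries R}
    (hf : ∀ i < 0, f.coeff i = 0) :
    ∃ P : PowerSeries R, (P : LaurentSeries R) = f := by
  refine ⟨PowerSeries.mk fun n => f.coeff n, ?_⟩
  ext i
  rw [PowerSeries.coeff_coe]
  split_ifs with hi
  · exact (hf i hi).symm
  · rw [PowerSeries.coeff_mk, Int.natAbs_of_nonneg (not_lt.mp hi)]

/-- `Δ_H`: series supported on the negative integers prime to `p`. -/
def polarPrimeTo {R : Type*} [Ring R] (p : ℕ) : AddSubgroup (LaurentSeries R) where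
  carrier := {g | ∀ i : ℤ, (0 ≤ i ∨ (p : ℤ) ∣ i) → g.coeff i = 0}
  zero_mem' _ _ := rfl
  add_mem' hf hg i hi := by rw [coeff_add, hf i hi, hg i hi, add_zero]
  neg_mem' hf i hi := by rw [coeff_neg, hf i hi, neg_zero]

variable {k : Type*} [Field k] {p : ℕ} [CharP k p]

instance : CharP (LaurentSeries k) p :=
  charP_of_injective_ringHom (C : k →+* LaurentSeries k).injective p

variable [Fact p.Prime]

theorem polarPrimeTo_disjoint_range_artinSchreier :
    Disjoint (polarPrimeTo p) (artinSchreier (LaurentSeries k) p).range := by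
  rw [AddSubgroup.disjoint_def]
  rintro _ hg ⟨h, rfl⟩
  rw [artinSchreier_apply] at hg ⊢
  rcases lt_or_ge h.order 0 with hneg | hnonneg
  · exfalso
    have h0 : h ≠ 0 := by rintro rfl; simp at hneg
    have hlt : (p : ℤ) * h.order < h.order := by
      have : (1 : ℤ) < p := by exact_mod_cast (Fact.out : p.Prime).one_lt
      nlinarith
    have hcoeff := hg (p * h.order) (Or.inr (dvd_mul_right _ _))
    rw [coeff_sub, coeff_eq_zero_of_lt_order hlt, sub_zero, ← nsmul_eq_mul,
      coeff_pow_nsmul_order] at hcoeff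
    exact pow_ne_zero p (leadingCoeff_ne_zero.mpr h0) hcoeff
  · ext i
    rcases lt_or_ge i 0 with hi | hi
    · obtain ⟨P, rfl⟩ := exists_coe_powerSeries_eq fun i hi =>
        coeff_eq_zero_of_lt_order (hi.trans_le hnonneg)
      rw [← PowerSeries.coe_pow, ← PowerSeries.coe_sub, PowerSeries.coeff_coe, if_pos hi,
        coeff_zero]
    · exact hg i (Or.inl hi)

variable [IsAlgClosed k]

theorem mem_polarPrimeTo_sup_range_of_coeff_neg {f : LaurentSeries k}
    (hf : ∀ i < 0, f.coeff i = 0) :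
    f ∈ polarPrimeTo p ⊔ (artinSchreier (LaurentSeries k) p).range := by
  obtain ⟨P, rfl⟩ := exists_coe_powerSeries_eq hf
  obtain ⟨h, rfl⟩ := PowerSeries.exists_pow_char_sub_self_eq (Fact.out : p.Prime).one_lt P
  exact AddSubgroup.mem_sup_right ⟨h, by simp⟩

theorem single_neg_mem_polarPrimeTo_sup_range {n : ℕ} (hn : 0 < n) (c : k) :
    single (-(n : ℤ)) c ∈ polarPrimeTo p ⊔ (artinSchreier (LaurentSeries k) p).range := by
  induction n using Nat.strong_induction_on generalizing c with
  | _ n ih =>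
  by_cases hpn : p ∣ n
  · obtain ⟨m, rfl⟩ := hpn
    have hm : 0 < m := Nat.pos_of_mul_pos_left hn
    obtain ⟨c, rfl⟩ := surjective_frobenius k p c
    have hsingle : single (-((p * m : ℕ) : ℤ)) (frobenius k p c) =
        artinSchreier _ p (single (-(m : ℤ)) c) + single (-(m : ℤ)) c := by
      rw [artinSchreier_apply, sub_add_cancel, single_pow, frobenius_def, nsmul_eq_mul]
      push_cast
      rw [mul_neg]
    rw [hsingle]
    exact add_mem (AddSubgroup.mem_sup_right ⟨_, rfl⟩)
      (ih m (lt_mul_left hm (Fact.out : p.Prime).one_lt) hm c)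
  · refine AddSubgroup.mem_sup_left fun i hi => coeff_single_of_ne ?_
    rintro rfl
    rcases hi with hi | hi
    · omega
    · exact hpn (by exact_mod_cast dvd_neg.mp hi)

theorem mem_polarPrimeTo_sup_range (f : LaurentSeries k) :
    f ∈ polarPrimeTo p ⊔ (artinSchreier (LaurentSeries k) p).range := by
  suffices ∀ n : ℕ, ∀ f : LaurentSeries k, (∀ i < -(n : ℤ), f.coeff i = 0) →
      f ∈ polarPrimeTo p ⊔ (artinSchreier (LaurentSeries k) p).range from
    this (-f.order).toNat f fun i hi => coeff_eq_zero_of_lt_order (by omega)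
  intro n
  induction n with
  | zero => simpa using fun f => mem_polarPrimeTo_sup_range_of_coeff_neg (f := f)
  | succ n ih =>
    intro f hf
    set a : ℤ := -((n + 1 : ℕ) : ℤ)
    rw [← sub_add_cancel f (single a (f.coeff a))]
    refine add_mem (ih _ fun i hi => ?_) (single_neg_mem_polarPrimeTo_sup_range n.succ_pos _)
    rw [coeff_sub, coeff_single]
    split_ifs with hia
    · rw [hia, sub_self]
    · rw [hf i (by omega), sub_zero]

end LaurentSeries

/-- Over an algebraically closed field `k` of characteristic `p`, the composite of the
inclusion of `Δ_H` (Laurent polynomials with only terms of negative degree prime to `p`)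
into `k((t))` with the quotient by the Artin–Schreier map `℘(h) = h^p - h` is bijective:
every `f` is equivalent mod `℘(k((t)))` to a unique such `g`. -/
theorem stmt2 (p : ℕ) [Fact p.Prime] (k : Type*) [Field k] [IsAlgClosed k] [CharP k p]
    (f : LaurentSeries k) :
    ∃! g : LaurentSeries k,
      (∀ i : ℤ, (0 ≤ i ∨ (p : ℤ) ∣ i) → g.coeff i = 0) ∧
        ∃ h : LaurentSeries k, f = g + (h ^ p - h) := by
  obtain ⟨g, hg, _, ⟨h, rfl⟩, hf⟩ :=
    AddSubgroup.mem_sup.mp (LaurentSeries.mem_polarPrimeTo_sup_range (p := p) f)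
  refine ⟨g, ⟨hg, h, hf.symm⟩, ?_⟩
  rintro g' ⟨hg', h', hf'⟩
  have hdiff : artinSchreier _ p (h - h') = g' - g := by
    rw [map_sub]
    simp only [artinSchreier_apply] at hf ⊢
    linear_combination hf + hf'
  exact sub_eq_zero.mp <| AddSubgroup.disjoint_def.mp
    LaurentSeries.polarPrimeTo_disjoint_range_artinSchreier (sub_mem hg' hg) ⟨_, hdiff⟩
end

section
/- Let k be a field of characteristic p > 0, R = k[x_1,...,x_d], D a k-derivation of R with D^p = 0, and f ∈ R irreducible with f ∤ D(f). If x ∈ R is nonzero with D(x) = 0 and x = h·f^l with l > 0 and gcd(h, f) = 1, then p divides l and D(h) = 0; consequently x ∈ f^p · R^D. -/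
/-!
Differentiating `x = h f^l` gives `0 = f^(l-1) (l h Df + f Dh)`. As `f` is prime and divides
neither `h` nor `Df`, it divides the integer `l`, which in an algebra over a field forces `l = 0`
in `k`, i.e. `p ∣ l`; then `f Dh = 0`. Finally `D (f^m) = m f^(m-1) Df` vanishes when `p ∣ m`,
so `h f^(l-p)` is a constant cofactor of `f^p` in `x`.
-/

theorem Derivation.map_pow_eq_zero_of_dvd {R A M : Type*} [CommSemiring R] [CommSemiring A]
    [AddCommMonoid M] [Algebra R A] [Module A M] [Module R M] (p : ℕ) [CharP A p]
    (D : Derivation R A M) (a : A) {n : ℕ} (hn : p ∣ n) : D (a ^ n) = 0 := by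
  rw [D.leibniz_pow, ← Nat.cast_smul_eq_nsmul A, (CharP.cast_eq_zero_iff A p n).mpr hn,
    zero_smul]

theorem Derivation.map_mul_pow_succ {R A : Type*} [CommSemiring R] [CommSemiring A]
    [Algebra R A] (D : Derivation R A A) (h f : A) (n : ℕ) :
    D (h * f ^ (n + 1)) = f ^ n * ((n + 1 : ℕ) * h * D f + f * D h) := by
  rw [D.leibniz, D.leibniz_pow, Nat.add_sub_cancel, smul_eq_mul, smul_eq_mul, nsmul_eq_mul]
  ring

theorem Prime.natCast_eq_zero_of_dvd {k A : Type*} [Field k] [CommSemiring A] [Algebra k A]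
    {f : A} (hf : Prime f) {n : ℕ} (hn : f ∣ (n : A)) : (n : k) = 0 := by
  by_contra hn0
  have hunit : IsUnit (n : A) := by
    rw [← map_natCast (algebraMap k A)]
    exact (isUnit_iff_ne_zero.mpr hn0).map _
  exact hf.not_isUnit (isUnit_of_dvd_unit hn hunit)

theorem Derivation.natCast_eq_zero_and_map_eq_zero_of_map_mul_pow_eq_zero
    {R k A : Type*} [CommSemiring R] [Field k] [CommRing A] [IsDomain A] [Algebra R A]
    [Algebra k A] (D : Derivation R A A) {f h : A} (hf : Prime f) (hDf : ¬ f ∣ D f)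
    (hh : ¬ f ∣ h) {l : ℕ} (hl : 0 < l) (hD : D (h * f ^ l) = 0) :
    (l : k) = 0 ∧ D h = 0 := by
  obtain ⟨n, rfl⟩ : ∃ n, l = n + 1 := ⟨l - 1, by omega⟩
  rw [D.map_mul_pow_succ] at hD
  have key : ((n + 1 : ℕ) : A) * h * D f + f * D h = 0 :=
    (mul_eq_zero.mp hD).resolve_left (pow_ne_zero n hf.ne_zero)
  have hdvd : f ∣ ((n + 1 : ℕ) : A) * h * D f := ⟨-D h, by linear_combination key⟩
  have hl0 : ((n + 1 : ℕ) : k) = 0 := by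
    rcases hf.dvd_mul.mp hdvd with hdvd' | hdvd'
    · rcases hf.dvd_mul.mp hdvd' with hcast | hdvdh
      · exact hf.natCast_eq_zero_of_dvd hcast
      · exact absurd hdvdh hh
    · exact absurd hdvd' hDf
  have hlA : ((n + 1 : ℕ) : A) = 0 := by
    rw [← _root_.map_natCast (algebraMap k A), hl0, map_zero]
  rw [hlA, zero_mul, zero_mul, zero_add] at key
  exact ⟨hl0, (mul_eq_zero.mp key).resolve_left hf.ne_zero⟩

theorem stmt5_general (p : ℕ) (k : Type*) [Field k] [CharP k p]
    (d : ℕ) (D : Derivation k (MvPolynomial (Fin d) k) (MvPolynomial (Fin d) k))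
    (f : MvPolynomial (Fin d) k) (hf : Irreducible f) (hndvd : ¬ f ∣ D f)
    (x h : MvPolynomial (Fin d) k) (l : ℕ)
    (hDx : D x = 0) (hxe : x = h * f ^ l) (hl : 0 < l)
    (hcop : ¬ f ∣ h) :
    p ∣ l ∧ D h = 0 ∧ ∃ y : MvPolynomial (Fin d) k, D y = 0 ∧ x = f ^ p * y := by
  obtain ⟨hlk, hDh⟩ := D.natCast_eq_zero_and_map_eq_zero_of_map_mul_pow_eq_zero (k := k)
    hf.prime hndvd hcop hl (hxe ▸ hDx)
  have hpl : p ∣ l := (CharP.cast_eq_zero_iff k p l).mp hlk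
  refine ⟨hpl, hDh, h * f ^ (l - p), ?_, ?_⟩
  · rw [D.leibniz, D.map_pow_eq_zero_of_dvd p f (Nat.dvd_sub hpl dvd_rfl), hDh,
      smul_zero, zero_add, smul_zero]
  · rw [hxe, mul_left_comm, ← pow_add, Nat.add_sub_cancel' (Nat.le_of_dvd hl hpl)]

/-- Let `D` be a `p`-nilpotent derivation of `R = k[x₁,…,x_d]` and `f` irreducible with
`f ∤ D f`.  If `x ≠ 0`, `D x = 0` and `x = h f^l` with `l > 0` and `f ∤ h`, then `p ∣ l`,
`D h = 0`, and consequently `x ∈ f^p · R^D`. -/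
theorem stmt5 (p : ℕ) [Fact p.Prime] (k : Type*) [Field k] [CharP k p]
    (d : ℕ) (D : Derivation k (MvPolynomial (Fin d) k) (MvPolynomial (Fin d) k))
    (hnil : (D.toLinearMap : Module.End k (MvPolynomial (Fin d) k)) ^ p = 0)
    (f : MvPolynomial (Fin d) k) (hf : Irreducible f) (hndvd : ¬ f ∣ D f)
    (x h : MvPolynomial (Fin d) k) (l : ℕ)
    (hx0 : x ≠ 0) (hDx : D x = 0) (hxe : x = h * f ^ l) (hl : 0 < l)
    (hcop : ¬ f ∣ h) :
    p ∣ l ∧ D h = 0 ∧ ∃ y : MvPolynomial (Fin d) k, D y = 0 ∧ x = f ^ p * y :=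
  stmt5_general p k d D f hf hndvd x h l hDx hxe hl hcop
end

section
/- Let k be a field of characteristic 2 and let D be the k-derivation on k[x_0,y_0,x_1,y_1] with D(x_i) = 0 and D(y_i) = x_i for i = 0,1. Then the invariant ring k[x_0,y_0,x_1,y_1]^D equals k[x_0, y_0^2, x_1, y_1^2, x_0 y_1 + x_1 y_0], and is isomorphic to k[V,W,X,Y,Z]/(Z^2 + V^2 Y + X^2 W) via V ↦ x_0, W ↦ y_0^2, X ↦ x_1, Y ↦ y_1^2, Z ↦ x_0 y_1 + x_1 y_0. -/
open MvPolynomial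

/-- The invariant subalgebra `R^D = ker D` of a derivation. -/
def invariants {k : Type*} [CommRing k] {d : ℕ}
    (D : Derivation k (MvPolynomial (Fin d) k) (MvPolynomial (Fin d) k)) :
    Subalgebra k (MvPolynomial (Fin d) k) where
  carrier := {f | D f = 0}
  mul_mem' := by
    intro a b ha hb
    simp only [Set.mem_setOf_eq] at ha hb ⊢
    rw [Derivation.leibniz, ha, hb, smul_zero, smul_zero, add_zero]
  add_mem' := by
    intro a b ha hb
    simp only [Set.mem_setOf_eq] at ha hb ⊢
    rw [map_add, ha, hb, add_zero]
  algebraMap_mem' := fun r => by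
    simp only [Set.mem_setOf_eq, Derivation.map_algebraMap]

/-- The derivation on `k[x₀,y₀,x₁,y₁]` (variables indexed `0,1,2,3` as `x₀,y₀,x₁,y₁`)
with `D xᵢ = 0`, `D yᵢ = xᵢ`. -/
noncomputable def D7 (k : Type*) [CommRing k] :
    Derivation k (MvPolynomial (Fin 4) k) (MvPolynomial (Fin 4) k) :=
  MvPolynomial.mkDerivation k ![0, X 0, 0, X 2]

/-!
In characteristic 2 every polynomial is uniquely `A + B y₀ + C y₁ + E y₀y₁` with `A, B, C, E` in
`R = k[x₀, y₀², x₁, y₁²]`: uniqueness holds because `∂/∂y₀` and `∂/∂y₁` vanish on `R` (as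
`∂y² = 2y = 0`). Since `D` also vanishes on `R`, `D f = (x₀B + x₁C) + x₁E y₀ + x₀E y₁`, so `f` is
invariant iff `E = 0` and `x₀B = x₁C`, i.e. `B = x₁t`, `C = x₀t` and `f = A + t (x₀y₁ + x₁y₀)`.

For the presentation, the relation is monic of degree 2 in `Z`, so every element of `k[V,W,X,Y,Z]`
is `q · rel + a + b Z` with `a, b ∈ k[V,W,X,Y]`. Its image is
`A + B (x₀y₁ + x₁y₀) = A + x₁B y₀ + x₀B y₁`, where `A, B ∈ R` are the images of `a, b` under the
injective map `k[V,W,X,Y] → R`, so it vanishes only if `a = b = 0`.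
-/

theorem mem_invariants {k : Type*} [CommRing k] {d : ℕ}
    {D : Derivation k (MvPolynomial (Fin d) k) (MvPolynomial (Fin d) k)}
    {f : MvPolynomial (Fin d) k} : f ∈ invariants D ↔ D f = 0 := Iff.rfl

namespace MvPolynomial

variable {σ R : Type*} [CommSemiring R]

theorem aeval_range_le_iff {A : Type*} [CommSemiring A] [Algebra R A] {f : σ → A}
    {S : Subalgebra R A} : (aeval f).range ≤ S ↔ ∀ i, f i ∈ S := by
  rw [aeval_range, Algebra.adjoin_le_iff, Set.range_subset_iff]; rfl

theorem eq_zero_of_add_mul_X_eq_zero {i : σ} {P Q : MvPolynomial σ R}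
    (hP : pderiv i P = 0) (hQ : pderiv i Q = 0) (h : P + Q * X i = 0) : P = 0 ∧ Q = 0 := by
  have hQ0 : Q = 0 := by
    simpa [Derivation.leibniz, hP, hQ] using congrArg (pderiv i) h
  exact ⟨by simpa [hQ0] using h, hQ0⟩

section ScaleExponents

variable (n : σ → ℕ)

noncomputable def scaleExponents (u : σ →₀ ℕ) : σ →₀ ℕ :=
  Finsupp.onFinset u.support (fun i => n i * u i) fun i h => by
    simpa using right_ne_zero_of_mul h

@[simp]
theorem scaleExponents_apply (u : σ →₀ ℕ) (i : σ) : scaleExponents n u i = n i * u i := rfl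

theorem support_scaleExponents_subset (u : σ →₀ ℕ) : (scaleExponents n u).support ⊆ u.support :=
  Finsupp.support_onFinset_subset

theorem scaleExponents_injective (hn : ∀ i, n i ≠ 0) : Function.Injective (scaleExponents n) :=
  fun u v h => Finsupp.ext fun i => by
    simpa [hn i] using DFunLike.congr_fun h i

theorem aeval_X_pow_monomial (u : σ →₀ ℕ) (r : R) :
    aeval (fun i => (X i : MvPolynomial σ R) ^ n i) (monomial u r) =
      monomial (scaleExponents n u) r := by
  rw [aeval_monomial, monomial_eq, algebraMap_eq, Finsupp.prod_of_support_subset _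
    (support_scaleExponents_subset n u) (fun i e => X i ^ e) (fun _ _ => pow_zero _)]
  simp only [Finsupp.prod, scaleExponents_apply, ← pow_mul]

theorem coeff_scaleExponents_aeval_X_pow (hn : ∀ i, n i ≠ 0) (a : MvPolynomial σ R)
    (u : σ →₀ ℕ) :
    coeff (scaleExponents n u) (aeval (fun i => (X i : MvPolynomial σ R) ^ n i) a) =
      coeff u a := by
  induction a using MvPolynomial.induction_on' with
  | monomial v r =>
    classical
    simp only [aeval_X_pow_monomial, coeff_monomial, (scaleExponents_injective n hn).eq_iff]
  | add p q hp hq => simp only [map_add, coeff_add, hp, hq]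

theorem aeval_X_pow_injective (hn : ∀ i, n i ≠ 0) :
    Function.Injective (aeval (R := R) fun i => (X i : MvPolynomial σ R) ^ n i) := by
  intro a b h
  ext u
  rw [← coeff_scaleExponents_aeval_X_pow n hn, h, coeff_scaleExponents_aeval_X_pow n hn]

end ScaleExponents

end MvPolynomial

theorem MvPolynomial.exists_eq_X_mul_of_X_mul_eq_X_mul {σ R : Type*} [CommRing R] [IsDomain R]
    {i j : σ} {b c : MvPolynomial σ R} (hij : i ≠ j) (h : X i * b = X j * c) :
    ∃ t, b = X j * t ∧ c = X i * t := by
  have hdvd : X j ∣ X i * b := ⟨c, h⟩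
  obtain ⟨t, rfl⟩ := (X_prime.dvd_or_dvd hdvd).resolve_left (by simpa [X_dvd_X] using hij.symm)
  refine ⟨t, rfl, mul_left_cancel₀ (X_ne_zero j) ?_⟩
  rw [← h]
  ring

theorem MvPolynomial.exists_eq_mul_add_rename_add_rename_mul_X_last {R : Type*} [CommRing R]
    {m : ℕ} (r : MvPolynomial (Fin m) R) (f : MvPolynomial (Fin (m + 1)) R) :
    ∃ q a b, f = q * (X (Fin.last m) ^ 2 + rename Fin.castSucc r) + rename Fin.castSucc a +
      rename Fin.castSucc b * X (Fin.last m) := by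
  induction f using MvPolynomial.induction_on with
  | C c => exact ⟨0, C c, 0, by simp⟩
  | add f g hf hg =>
    obtain ⟨q, a, b, rfl⟩ := hf
    obtain ⟨q', a', b', rfl⟩ := hg
    exact ⟨q + q', a + a', b + b', by simp only [map_add]; ring⟩
  | mul_X f i hf =>
    obtain ⟨q, a, b, rfl⟩ := hf
    induction i using Fin.lastCases with
    | last => exact ⟨q * X (Fin.last m) + rename Fin.castSucc b, -(b * r), a, by
        simp only [map_neg, map_mul]; ring⟩
    | cast j => exact ⟨q * X j.castSucc, a * X j, b * X j, by simp only [map_mul, rename_X]; ring⟩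

section SquaringY

variable (k : Type*) [CommRing k]

/-- Parametrises `k[x₀, y₀², x₁, y₁²]`. -/
noncomputable def sqY : MvPolynomial (Fin 4) k →ₐ[k] MvPolynomial (Fin 4) k :=
  aeval fun i => X i ^ ![1, 2, 1, 2] i

variable {k}

@[simp] theorem sqY_X_zero : sqY k (X 0) = X 0 := by simp [sqY]
@[simp] theorem sqY_X_one : sqY k (X 1) = X 1 ^ 2 := by simp [sqY]
@[simp] theorem sqY_X_two : sqY k (X 2) = X 2 := by simp [sqY]
@[simp] theorem sqY_X_three : sqY k (X 3) = X 3 ^ 2 := by simp [sqY]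

theorem sqY_injective : Function.Injective (sqY k) :=
  aeval_X_pow_injective _ fun i => by fin_cases i <;> decide

theorem sqY_mem {S : Subalgebra k (MvPolynomial (Fin 4) k)} (h₀ : X 0 ∈ S) (h₁ : X 1 ^ 2 ∈ S)
    (h₂ : X 2 ∈ S) (h₃ : X 3 ^ 2 ∈ S) (a : MvPolynomial (Fin 4) k) : sqY k a ∈ S :=
  aeval_range_le_iff.2 (fun i => by fin_cases i <;> simpa) ⟨a, rfl⟩

theorem exists_sqY_decomp (f : MvPolynomial (Fin 4) k) :
    ∃ a b c d, f = sqY k a + sqY k b * X 1 + sqY k c * X 3 + sqY k d * (X 1 * X 3) := by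
  induction f using MvPolynomial.induction_on with
  | C r => exact ⟨C r, 0, 0, 0, by simp [sqY]⟩
  | add f g hf hg =>
    obtain ⟨a, b, c, d, rfl⟩ := hf
    obtain ⟨a', b', c', d', rfl⟩ := hg
    exact ⟨a + a', b + b', c + c', d + d', by simp only [map_add]; ring⟩
  | mul_X f i hf =>
    obtain ⟨a, b, c, d, rfl⟩ := hf
    match i with
    | 0 => exact ⟨X 0 * a, X 0 * b, X 0 * c, X 0 * d, by simp only [map_mul, sqY_X_zero]; ring⟩
    | 1 => exact ⟨X 1 * b, a, X 1 * d, c, by simp only [map_mul, sqY_X_one]; ring⟩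
    | 2 => exact ⟨X 2 * a, X 2 * b, X 2 * c, X 2 * d, by simp only [map_mul, sqY_X_two]; ring⟩
    | 3 => exact ⟨X 3 * c, X 3 * d, a, b, by simp only [map_mul, sqY_X_three]; ring⟩

variable [CharP k 2]

theorem pderiv_sqY {i : Fin 4} (hi : i = 1 ∨ i = 3) (a : MvPolynomial (Fin 4) k) :
    pderiv i (sqY k a) = 0 := by
  rw [← mem_invariants]
  rcases hi with rfl | rfl <;> refine sqY_mem ?_ ?_ ?_ ?_ a <;>
    simp [mem_invariants, pderiv_X, CharTwo.two_eq_zero]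

theorem eq_zero_of_sqY_decomp_eq_zero {a b c d : MvPolynomial (Fin 4) k}
    (h : sqY k a + sqY k b * X 1 + sqY k c * X 3 + sqY k d * (X 1 * X 3) = 0) :
    a = 0 ∧ b = 0 ∧ c = 0 ∧ d = 0 := by
  have hX₁ : pderiv (3 : Fin 4) (X 1 : MvPolynomial (Fin 4) k) = 0 := pderiv_X_of_ne (by decide)
  obtain ⟨hab, hcd⟩ := eq_zero_of_add_mul_X_eq_zero (i := 3)
    (P := sqY k a + sqY k b * X 1) (Q := sqY k c + sqY k d * X 1)
    (by simp [Derivation.leibniz, pderiv_sqY, hX₁])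
    (by simp [Derivation.leibniz, pderiv_sqY, hX₁])
    (by linear_combination h)
  obtain ⟨ha, hb⟩ := eq_zero_of_add_mul_X_eq_zero (pderiv_sqY (.inl rfl) a)
    (pderiv_sqY (.inl rfl) b) hab
  obtain ⟨hc, hd⟩ := eq_zero_of_add_mul_X_eq_zero (pderiv_sqY (.inl rfl) c)
    (pderiv_sqY (.inl rfl) d) hcd
  simp only [map_eq_zero_iff _ sqY_injective] at ha hb hc hd
  exact ⟨ha, hb, hc, hd⟩

end SquaringY

section Invariants

variable {k : Type*} [CommRing k]

@[simp] theorem D7_X_zero : D7 k (X 0) = 0 := by simp [D7, mkDerivation_X]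
@[simp] theorem D7_X_one : D7 k (X 1) = X 0 := by simp [D7, mkDerivation_X]
@[simp] theorem D7_X_two : D7 k (X 2) = 0 := by simp [D7, mkDerivation_X]
@[simp] theorem D7_X_three : D7 k (X 3) = X 2 := by simp [D7, mkDerivation_X]

theorem sqY_mul_x₀y₁_add_x₁y₀ (t : MvPolynomial (Fin 4) k) :
    sqY k t * (X 0 * X 3 + X 2 * X 1) = sqY k (X 2 * t) * X 1 + sqY k (X 0 * t) * X 3 := by
  simp only [map_mul, sqY_X_zero, sqY_X_two]
  ring

variable [CharP k 2]

theorem D7_sqY (a : MvPolynomial (Fin 4) k) : D7 k (sqY k a) = 0 := by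
  rw [← mem_invariants]
  refine sqY_mem ?_ ?_ ?_ ?_ a <;>
    simp [mem_invariants, CharTwo.two_eq_zero]

theorem D7_sqY_decomp (a b c d : MvPolynomial (Fin 4) k) :
    D7 k (sqY k a + sqY k b * X 1 + sqY k c * X 3 + sqY k d * (X 1 * X 3)) =
      sqY k (X 0 * b + X 2 * c) + sqY k (X 2 * d) * X 1 + sqY k (X 0 * d) * X 3 := by
  simp only [map_add, map_mul, Derivation.leibniz, D7_sqY, D7_X_one, D7_X_three, sqY_X_zero,
    sqY_X_two, smul_eq_mul]
  ring

theorem D7_x₀y₁_add_x₁y₀ : D7 k (X 0 * X 3 + X 2 * X 1) = 0 := by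
  simp [Derivation.leibniz, mul_comm (X 0 : MvPolynomial (Fin 4) k), CharTwo.add_self_eq_zero]

theorem invariants_D7 [IsDomain k] :
    invariants (D7 k) = Algebra.adjoin k {X 0, X 1 ^ 2, X 2, X 3 ^ 2, X 0 * X 3 + X 2 * X 1} := by
  refine le_antisymm (fun f hf => ?_) (Algebra.adjoin_le ?_)
  · obtain ⟨a, b, c, d, rfl⟩ := exists_sqY_decomp f
    have hDf : sqY k (X 0 * b + X 2 * c) + sqY k (X 2 * d) * X 1 + sqY k (X 0 * d) * X 3 +
        sqY k 0 * (X 1 * X 3) = 0 := by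
      rwa [map_zero, zero_mul, add_zero, ← D7_sqY_decomp]
    obtain ⟨hbc, hd₂, -, -⟩ := eq_zero_of_sqY_decomp_eq_zero hDf
    obtain rfl : d = 0 := (mul_eq_zero.1 hd₂).resolve_left (X_ne_zero _)
    obtain ⟨t, rfl, rfl⟩ :=
      exists_eq_X_mul_of_X_mul_eq_X_mul (by decide) (CharTwo.add_eq_zero.1 hbc)
    rw [map_zero, zero_mul, add_zero, add_assoc, ← sqY_mul_x₀y₁_add_x₁y₀]
    have hsqY := sqY_mem (S := Algebra.adjoin k {X 0, X 1 ^ 2, X 2, X 3 ^ 2, X 0 * X 3 + X 2 * X 1})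
      (Algebra.subset_adjoin (by simp)) (Algebra.subset_adjoin (by simp))
      (Algebra.subset_adjoin (by simp)) (Algebra.subset_adjoin (by simp))
    exact add_mem (hsqY a) (mul_mem (hsqY t) (Algebra.subset_adjoin (by simp)))
  · rintro _ (rfl | rfl | rfl | rfl | rfl) <;>
      simp [mem_invariants, CharTwo.two_eq_zero, D7_x₀y₁_add_x₁y₀]

end Invariants

section Presentation

variable (k : Type*) [CommRing k]

/-- `V, W, X, Y, Z ↦ x₀, y₀², x₁, y₁², x₀y₁ + x₁y₀`. -/
noncomputable def invariantsPresentation : MvPolynomial (Fin 5) k →ₐ[k] MvPolynomial (Fin 4) k :=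
  aeval ![X 0, X 1 ^ 2, X 2, X 3 ^ 2, X 0 * X 3 + X 2 * X 1]

variable {k}

theorem invariantsPresentation_rename (a : MvPolynomial (Fin 4) k) :
    invariantsPresentation k (rename Fin.castSucc a) = sqY k a := by
  rw [invariantsPresentation, sqY, aeval_rename]
  exact congrArg (aeval · a) (funext fun i => by fin_cases i <;> simp)

variable [CharP k 2]

theorem invariantsPresentation_relation :
    invariantsPresentation k (X 4 ^ 2 + X 0 ^ 2 * X 3 + X 2 ^ 2 * X 1) = 0 := by
  simp only [invariantsPresentation, map_add, map_mul, map_pow, aeval_X, Matrix.cons_val]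
  linear_combination (X 0 ^ 2 * X 3 ^ 2 + X 2 ^ 2 * X 1 ^ 2 + X 0 * X 3 * X 2 * X 1) *
    CharTwo.two_eq_zero (R := MvPolynomial (Fin 4) k)

theorem eq_zero_of_sqY_add_sqY_mul_eq_zero [IsDomain k] {a t : MvPolynomial (Fin 4) k}
    (h : sqY k a + sqY k t * (X 0 * X 3 + X 2 * X 1) = 0) : a = 0 ∧ t = 0 := by
  have h' : sqY k a + sqY k (X 2 * t) * X 1 + sqY k (X 0 * t) * X 3 +
      sqY k 0 * (X 1 * X 3) = 0 := by
    rwa [map_zero, zero_mul, add_zero, add_assoc, ← sqY_mul_x₀y₁_add_x₁y₀]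
  obtain ⟨ha, ht, -, -⟩ := eq_zero_of_sqY_decomp_eq_zero h'
  exact ⟨ha, (mul_eq_zero.1 ht).resolve_left (X_ne_zero _)⟩

theorem ker_invariantsPresentation [IsDomain k] :
    RingHom.ker (invariantsPresentation k).toRingHom =
      Ideal.span {X 4 ^ 2 + X 0 ^ 2 * X 3 + X 2 ^ 2 * X 1} := by
  ext f
  rw [RingHom.mem_ker, Ideal.mem_span_singleton]
  have hrel : (X 4 ^ 2 + X 0 ^ 2 * X 3 + X 2 ^ 2 * X 1 : MvPolynomial (Fin 5) k) =
      X (Fin.last 4) ^ 2 + rename Fin.castSucc (X 0 ^ 2 * X 3 + X 2 ^ 2 * X 1) := by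
    rw [add_assoc]
    simp only [map_add, map_mul, map_pow, rename_X]
    rfl
  have hZ : invariantsPresentation k (X (Fin.last 4)) = X 0 * X 3 + X 2 * X 1 := by
    simp [invariantsPresentation]
  constructor
  · intro hf
    obtain ⟨q, a, b, rfl⟩ :=
      exists_eq_mul_add_rename_add_rename_mul_X_last (X 0 ^ 2 * X 3 + X 2 ^ 2 * X 1) f
    rw [← hrel] at hf ⊢
    rw [AlgHom.toRingHom_eq_coe, RingHom.coe_coe, map_add, map_add, map_mul,
      invariantsPresentation_relation, mul_zero, zero_add, map_mul, invariantsPresentation_rename,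
      invariantsPresentation_rename, hZ] at hf
    obtain ⟨rfl, rfl⟩ := eq_zero_of_sqY_add_sqY_mul_eq_zero hf
    rw [map_zero, zero_mul, add_zero, add_zero]
    exact dvd_mul_left _ _
  · rintro ⟨q, rfl⟩
    rw [AlgHom.toRingHom_eq_coe, RingHom.coe_coe, map_mul, invariantsPresentation_relation,
      zero_mul]

theorem range_invariantsPresentation [IsDomain k] :
    (invariantsPresentation k).range = invariants (D7 k) := by
  rw [invariants_D7, invariantsPresentation, aeval_range]
  simp only [Matrix.range_cons, Matrix.range_empty, Set.union_empty, Set.singleton_union]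

end Presentation

/-- In characteristic `2`, with `D xᵢ = 0`, `D yᵢ = xᵢ` on `k[x₀,y₀,x₁,y₁]`, the invariant
ring is `k[x₀, y₀², x₁, y₁², x₀y₁ + x₁y₀]`, isomorphic to
`k[V,W,X,Y,Z]/(Z² + V²Y + X²W)` via `V ↦ x₀, W ↦ y₀², X ↦ x₁, Y ↦ y₁², Z ↦ x₀y₁ + x₁y₀`. -/
theorem stmt7 (k : Type*) [Field k] [CharP k 2] :
    invariants (D7 k) =
      Algebra.adjoin k
        {X 0, (X 1) ^ 2, X 2, (X 3) ^ 2, X 0 * X 3 + X 2 * X 1} ∧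
    ∃ φ : MvPolynomial (Fin 5) k →ₐ[k] MvPolynomial (Fin 4) k,
      φ (X 0) = X 0 ∧ φ (X 1) = (X 1) ^ 2 ∧ φ (X 2) = X 2 ∧ φ (X 3) = (X 3) ^ 2 ∧
      φ (X 4) = X 0 * X 3 + X 2 * X 1 ∧
      RingHom.ker φ.toRingHom =
        Ideal.span {(X 4) ^ 2 + (X 0) ^ 2 * X 3 + (X 2) ^ 2 * X 1} ∧
      φ.range = invariants (D7 k) := by
  refine ⟨invariants_D7, invariantsPresentation k, ?_, ?_, ?_, ?_, ?_,
    ker_invariantsPresentation, range_invariantsPresentation⟩ <;>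
  simp [invariantsPresentation]
end

section
/- Let A be a commutative ring of characteristic p > 0, M an A-module, and φ : M → M ⊗ A[ε]/(ε^p) an A-linear map, written φ = ∑_{i=0}^{p-1} φ_i ε^i with φ_i : M → M A-linear. Then φ satisfies the counit and coassociativity axioms of a comodule over the Hopf algebra A[ε]/(ε^p) (ε primitive) if and only if φ_0 = id_M and φ_i ∘ φ_j = binom(i+j, i) · φ_{i+j} for all 0 ≤ i, j < p (with φ_{i+j} = 0 for i + j ≥ p). In this case φ_1^p = 0 and φ = exp(φ_1 ε). -/
/-! In the basis `1, ε, …, ε^(p-1)` of `A[ε]` the counit axiom reads off `φ₀`, and since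
`Δ(ε^k) = ∑_{i+j=k} C(k,i) εⁱ ⊗ εʲ`, the coefficients of `εⁱ ⊗ εʲ` on the two sides of the
coassociativity axiom are `φᵢ φⱼ` and `C(i+j,i) φ_{i+j}`. For `i = 1` the relations say
`φ₁ φₖ = (k+1) φ_{k+1}`, so `k! φₖ = φ₁^k` by induction and `φ₁^p = p! φ_p = 0`. -/

open Polynomial TensorProduct

noncomputable section

/-- `A[ε] = A[x]/(x^p)`. -/
abbrev Aeps (p : ℕ) (A : Type*) [CommRing A] : Type _ :=
  AdjoinRoot ((X : A[X]) ^ p)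

/-- The class of `x`, i.e. `ε`. -/
def eps (p : ℕ) (A : Type*) [CommRing A] : Aeps p A := AdjoinRoot.root _

/-- The `A`-linear map `M → M ⊗ A[ε]/(ε^p)`, `m ↦ ∑_{i<p} φᵢ(m) ⊗ ε^i`, built from a
family of components `φᵢ : M → M`. -/
def coactOf (p : ℕ) (A : Type*) [CommRing A]
    {M : Type*} [AddCommGroup M] [Module A M] (φ : ℕ → Module.End A M) :
    M →ₗ[A] M ⊗[A] Aeps p A :=
  ∑ i ∈ Finset.range p,
    (TensorProduct.mk A M (Aeps p A)).flip ((eps p A) ^ i) ∘ₗ (φ i)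

theorem eps_pow_eq_zero_of_le {p : ℕ} {A : Type*} [CommRing A] {a : ℕ} (h : p ≤ a) :
    eps p A ^ a = 0 := by
  obtain ⟨b, rfl⟩ := Nat.exists_eq_add_of_le h
  rw [pow_add, eps, ← AdjoinRoot.mk_X, ← map_pow, AdjoinRoot.mk_self, zero_mul]

section Basis

variable (p : ℕ) (A : Type*) [CommRing A] [Nontrivial A]

-- Over the zero ring `X ^ p` has degree `0`, hence `[Nontrivial A]`.
def basisEps : Module.Basis (Fin p) A (Aeps p A) :=
  (AdjoinRoot.powerBasis' (monic_X_pow p)).basis.reindex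
    (finCongr (by rw [AdjoinRoot.powerBasis'_dim, natDegree_X_pow]))

theorem basisEps_apply (i : Fin p) : basisEps p A i = eps p A ^ (i : ℕ) := by
  simp [basisEps, eps]

variable {p A} {N : Type*} [AddCommGroup N] [Module A N]

def coeffEps (k : Fin p) : N ⊗[A] Aeps p A →ₗ[A] N :=
  Finsupp.lapply k ∘ₗ (equivFinsuppOfBasisRight (basisEps p A)).toLinearMap

theorem coeffEps_tmul_eps_pow (k : Fin p) (n : N) (a : ℕ) :
    coeffEps k (n ⊗ₜ[A] (eps p A ^ a)) = if a = k then n else 0 := by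
  rcases lt_or_ge a p with ha | ha
  · rw [← Fin.val_mk ha, ← basisEps_apply]
    simp [coeffEps, Finsupp.single_apply, Fin.ext_iff, eq_comm]
  · rw [eps_pow_eq_zero_of_le ha, tmul_zero, map_zero, if_neg (by omega)]

theorem ext_coeffEps {x y : N ⊗[A] Aeps p A} (h : ∀ k, coeffEps k x = coeffEps k y) : x = y :=
  (equivFinsuppOfBasisRight (basisEps p A)).injective (Finsupp.ext h)

end Basis

open Finset

section Coaction

variable {p : ℕ} {A : Type*} [CommRing A] {M : Type*} [AddCommGroup M] [Module A M]
  (φ : ℕ → Module.End A M)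

theorem coactOf_apply (m : M) :
    coactOf p A φ m = ∑ i ∈ range p, φ i m ⊗ₜ[A] (eps p A ^ i) := by
  simp [coactOf, LinearMap.sum_apply]

theorem rid_comp_lTensor_counit_comp_coactOf (hp : 0 < p) (counit : Aeps p A →ₐ[A] A)
    (hcounit : counit (eps p A) = 0) :
    (TensorProduct.rid A M).toLinearMap ∘ₗ
      LinearMap.lTensor M counit.toLinearMap ∘ₗ coactOf p A φ = φ 0 := by
  ext m
  simp [coactOf_apply, hcounit, zero_pow_eq, hp]

theorem comul_eps_pow (comul : Aeps p A →ₐ[A] Aeps p A ⊗[A] Aeps p A)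
    (hcomul : comul (eps p A) = eps p A ⊗ₜ 1 + 1 ⊗ₜ eps p A) (k : ℕ) :
    comul (eps p A ^ k) =
      ∑ x ∈ antidiagonal k, k.choose x.1 • ((eps p A ^ x.1) ⊗ₜ[A] (eps p A ^ x.2)) := by
  rw [map_pow, hcomul, (Commute.all _ _).add_pow']
  simp [Algebra.TensorProduct.tmul_pow]

variable [Nontrivial A]

theorem coeffEps_coeffEps_rTensor_coactOf_coactOf (i j : Fin p) (m : M) :
    coeffEps i (coeffEps j (LinearMap.rTensor (Aeps p A) (coactOf p A φ) (coactOf p A φ m))) =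
      φ i (φ j m) := by
  simp [coactOf_apply, coeffEps_tmul_eps_pow]

theorem coeffEps_coeffEps_assoc_lTensor_comul_coactOf (htop : ∀ n, p ≤ n → φ n = 0)
    (comul : Aeps p A →ₐ[A] Aeps p A ⊗[A] Aeps p A)
    (hcomul : comul (eps p A) = eps p A ⊗ₜ 1 + 1 ⊗ₜ eps p A) (i j : Fin p) (m : M) :
    coeffEps i (coeffEps j ((TensorProduct.assoc A M (Aeps p A) (Aeps p A)).symm
      (LinearMap.lTensor M comul.toLinearMap (coactOf p A φ m)))) =
      ((i + j : ℕ).choose i • φ (i + j)) m := by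
  simp only [coactOf_apply, map_sum, LinearMap.lTensor_tmul, AlgHom.toLinearMap_apply,
    comul_eps_pow comul hcomul, tmul_sum, tmul_smul, map_nsmul, assoc_symm_tmul,
    coeffEps_tmul_eps_pow]
  have hpair : ∀ x : ℕ × ℕ, (x.2 = j ∧ x.1 = i) ↔ x = ((i : ℕ), (j : ℕ)) := fun x => by
    rw [Prod.ext_iff, and_comm]
  simp_rw [apply_ite (coeffEps i), coeffEps_tmul_eps_pow, map_zero, ← ite_and, hpair, smul_ite,
    smul_zero, sum_ite_eq', HasAntidiagonal.mem_antidiagonal, sum_ite_eq, mem_range]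
  split_ifs with h
  · rfl
  · rw [htop _ (not_lt.mp h), smul_zero, LinearMap.zero_apply]

theorem coactOf_coassoc_iff (htop : ∀ n, p ≤ n → φ n = 0)
    (comul : Aeps p A →ₐ[A] Aeps p A ⊗[A] Aeps p A)
    (hcomul : comul (eps p A) = eps p A ⊗ₜ 1 + 1 ⊗ₜ eps p A) :
    LinearMap.rTensor (Aeps p A) (coactOf p A φ) ∘ₗ coactOf p A φ =
        (TensorProduct.assoc A M (Aeps p A) (Aeps p A)).symm.toLinearMap ∘ₗ
          LinearMap.lTensor M comul.toLinearMap ∘ₗ coactOf p A φ ↔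
      ∀ i j, i < p → j < p → φ i ∘ₗ φ j = ((i + j).choose i) • φ (i + j) := by
  constructor
  · intro h i j hi hj
    ext m
    have := congr(coeffEps ⟨i, hi⟩ (coeffEps ⟨j, hj⟩ ($h m)))
    simpa only [LinearMap.comp_apply, LinearEquiv.coe_coe,
      coeffEps_coeffEps_rTensor_coactOf_coactOf,
      coeffEps_coeffEps_assoc_lTensor_comul_coactOf φ htop comul hcomul] using this
  · intro h
    refine LinearMap.ext fun m => ext_coeffEps fun j => ext_coeffEps fun i => ?_
    simp only [LinearMap.comp_apply, LinearEquiv.coe_coe,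
      coeffEps_coeffEps_rTensor_coactOf_coactOf,
      coeffEps_coeffEps_assoc_lTensor_comul_coactOf φ htop comul hcomul]
    exact congr($(h i j i.2 j.2) m)

end Coaction

theorem factorial_nsmul_eq_pow {R : Type*} [Semiring R] {f : ℕ → R} {n : ℕ} (h0 : f 0 = 1)
    (hsucc : ∀ k < n, f 1 * f k = (k + 1) • f (k + 1)) {k : ℕ} (hk : k ≤ n) :
    k.factorial • f k = f 1 ^ k := by
  induction k with
  | zero => simp [h0]
  | succ k ih =>
    rw [Nat.factorial_succ, mul_nsmul, ← hsucc k hk, ← mul_smul_comm, ih (by omega),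
      pow_succ']

/-- A map `φ = ∑ φᵢ εⁱ : M → M ⊗ A[ε]/(ε^p)` satisfies the counit and coassociativity
axioms iff `φ₀ = id` and `φᵢ ∘ φⱼ = C(i+j, i) φ_{i+j}` for `0 ≤ i, j < p` (with
`φ_{i+j} = 0` for `i+j ≥ p`).  In this case `φ₁^p = 0` and `φ = exp(φ₁ ε)`, i.e.
`i! • φᵢ = φ₁^i`. -/
theorem stmt9 (p : ℕ) [Fact p.Prime] (A : Type*) [CommRing A] [CharP A p]
    (M : Type*) [AddCommGroup M] [Module A M]
    (φ : ℕ → Module.End A M) (htop : ∀ n, p ≤ n → φ n = 0)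
    (counit : Aeps p A →ₐ[A] A) (hcounit : counit (eps p A) = 0)
    (comul : Aeps p A →ₐ[A] Aeps p A ⊗[A] Aeps p A)
    (hcomul : comul (eps p A) = eps p A ⊗ₜ 1 + 1 ⊗ₜ eps p A) :
    (((TensorProduct.rid A M).toLinearMap ∘ₗ
        LinearMap.lTensor M counit.toLinearMap ∘ₗ coactOf p A φ = LinearMap.id ∧
      LinearMap.rTensor (Aeps p A) (coactOf p A φ) ∘ₗ coactOf p A φ =
        (TensorProduct.assoc A M (Aeps p A) (Aeps p A)).symm.toLinearMap ∘ₗ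
          LinearMap.lTensor M comul.toLinearMap ∘ₗ coactOf p A φ) ↔
      (φ 0 = LinearMap.id ∧
        ∀ i j, i < p → j < p → φ i ∘ₗ φ j = ((i + j).choose i) • φ (i + j))) ∧
    ((φ 0 = LinearMap.id ∧
        ∀ i j, i < p → j < p → φ i ∘ₗ φ j = ((i + j).choose i) • φ (i + j)) →
      (φ 1) ^ p = 0 ∧ ∀ i, i < p → (i.factorial : ℕ) • φ i = (φ 1) ^ i) := by
  have hp : p.Prime := Fact.out
  have : Nontrivial A := CharP.nontrivial_of_char_ne_one hp.ne_one
  rw [rid_comp_lTensor_counit_comp_coactOf φ hp.pos counit hcounit,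
    coactOf_coassoc_iff φ htop comul hcomul]
  refine ⟨Iff.rfl, fun ⟨h0, hrel⟩ => ?_⟩
  have hsucc (k : ℕ) (hk : k < p) : φ 1 * φ k = (k + 1) • φ (k + 1) := by
    simpa [add_comm, Module.End.mul_eq_comp] using hrel 1 k hp.one_lt hk
  refine ⟨?_, fun i hi => factorial_nsmul_eq_pow h0 hsucc hi.le⟩
  rw [← factorial_nsmul_eq_pow h0 hsucc le_rfl, htop p le_rfl, smul_zero]

end
end

section
/- Let k be a field of characteristic p > 0 and let K = k((t))[z]/(z^p − f) with f ∈ k((t)). Define the coaction ψ : K → K[ε]/(ε^p) over k((t)) by z ↦ z + ε, and the coaction θ on k[x,y] by x ↦ x, y ↦ y + xε. A k-algebra homomorphism γ : k[x,y] → K is equivariant (i.e. ψ ∘ γ = (γ ⊗ id) ∘ θ) if and only if there exist a, b ∈ k((t)) with γ(x) = a and γ(y) = b + a·z. -/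
/-!
Write `u ∈ K` as `P(z)` with `deg P < p`. Since `ψ` is a `k((t))`-algebra map with `z ↦ z + ε`,
`ψ u = P(z + ε)`, and as `deg P < p` this is an honest polynomial in `ε`, not truncated by
`ε ^ p = 0`. So `ψ u = u + w ε` forces the Taylor expansion of `P` at `z` to be `u + w X`,
i.e. `P = u + w (X - z)`, whence `u = P(0) + w z`. Equivariance at `x` gives `ψ γ(x) = γ(x)`,
so `γ(x) = a ∈ k((t))`; at `y` it gives `ψ γ(y) = γ(y) + a ε`, so `γ(y) = b + a z`.
Conversely, these formulas make the two ring maps agree on `x`, `y` and on constants.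
-/

open Polynomial

namespace AdjoinRoot

theorem exists_degree_lt_mk_eq {L : Type*} [CommRing L] [Nontrivial L] {g : L[X]} (hg : g.Monic)
    (u : AdjoinRoot g) : ∃ P : L[X], P.degree < g.degree ∧ mk g P = u := by
  obtain ⟨Q, rfl⟩ := mk_surjective u
  exact ⟨Q %ₘ g, degree_modByMonic_lt Q hg, by rw [← modByMonicHom_mk hg, mk_leftInverse hg]⟩

theorem eq_of_mk_X_pow_eq {S : Type*} [CommRing S] {n : ℕ} {A B : S[X]}
    (hA : A.degree < n) (hB : B.degree < n) (h : mk (X ^ n) A = mk (X ^ n) B) : A = B := by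
  nontriviality S
  have hdvd : X ^ n ∣ A - B := mk_eq_mk.mp h
  have hdeg : (A - B).degree < (X ^ n : S[X]).degree := by
    rw [degree_X_pow]
    exact (degree_sub_le A B).trans_lt (max_lt hA hB)
  rw [← sub_eq_zero, ← (modByMonic_eq_self_iff (monic_X_pow n)).mpr hdeg,
    (modByMonic_eq_zero_iff_dvd (monic_X_pow n)).mpr hdvd]

variable {L : Type*} [CommRing L] {g : L[X]} {n : ℕ}

theorem map_mk_eq_mk_taylor
    (ψ : AdjoinRoot g →ₐ[L] AdjoinRoot (X ^ n : (AdjoinRoot g)[X]))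
    (hψ : ψ (root g) = of _ (root g) + root (X ^ n : (AdjoinRoot g)[X])) (P : L[X]) :
    ψ (mk g P) = mk (X ^ n) (taylor (root g) (P.map (algebraMap L (AdjoinRoot g)))) := by
  rw [← aeval_eq, ← aeval_algHom_apply, hψ, taylor_apply, comp, hom_eval₂, eval₂_map, aeval_def,
    algebraMap_eq' L, map_add, mk_X, mk_C, add_comm]
  rfl

theorem exists_eq_algebraMap_add_mul_root [Nontrivial L] (hg : g.Monic) (hgn : g.natDegree ≤ n)
    (hn : 2 ≤ n) (ψ : AdjoinRoot g →ₐ[L] AdjoinRoot (X ^ n : (AdjoinRoot g)[X]))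
    (hψ : ψ (root g) = of _ (root g) + root (X ^ n : (AdjoinRoot g)[X])) {u w : AdjoinRoot g}
    (h : ψ u = of _ u + of _ w * root (X ^ n : (AdjoinRoot g)[X])) :
    ∃ b : L, u = algebraMap L _ b + w * root g := by
  obtain ⟨P, hPdeg, rfl⟩ := exists_degree_lt_mk_eq hg u
  set R := P.map (algebraMap L (AdjoinRoot g)) with hR
  have hRdeg : R.degree < n :=
    degree_map_le.trans_lt (hPdeg.trans_le (degree_le_natDegree.trans (by exact_mod_cast hgn)))
  have hlin : (C (mk g P) + C w * X).degree < (n : WithBot ℕ) := by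
    refine (degree_add_le _ _).trans_lt (max_lt ?_ ?_)
    · exact degree_C_le.trans_lt (by exact_mod_cast (by omega : 0 < n))
    · exact (degree_C_mul_X_le w).trans_lt (by exact_mod_cast (by omega : 1 < n))
  have htaylor : taylor (root g) R = C (mk g P) + C w * X := by
    refine eq_of_mk_X_pow_eq (by rwa [degree_taylor]) hlin ?_
    rw [← map_mk_eq_mk_taylor ψ hψ, h, map_add, map_mul, mk_C, mk_C, mk_X]
  have hlinear : R = C (mk g P) + C w * (X - C (root g)) := by
    simpa [taylor_taylor, taylor_mul, sub_eq_add_neg] using congrArg (taylor (-root g)) htaylor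
  refine ⟨P.coeff 0, ?_⟩
  have hcoeff : algebraMap L _ (P.coeff 0) = mk g P - w * root g := by
    rw [← coeff_map, ← hR, hlinear]
    simp [sub_eq_add_neg]
  rw [hcoeff]
  ring

section Equivariant

variable {k : Type*} [CommRing k] [Algebra k L]
  {γ : MvPolynomial (Fin 2) k →ₐ[k] AdjoinRoot g}
  {ψ : AdjoinRoot g →ₐ[L] AdjoinRoot (X ^ n : (AdjoinRoot g)[X])}
  {θ : MvPolynomial (Fin 2) k →ₐ[k] AdjoinRoot (X ^ n : (MvPolynomial (Fin 2) k)[X])}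
  {γε : AdjoinRoot (X ^ n : (MvPolynomial (Fin 2) k)[X]) →+* AdjoinRoot (X ^ n : (AdjoinRoot g)[X])}

theorem exists_image_X_of_equivariant [Nontrivial L] (hg : g.Monic) (hgn : g.natDegree ≤ n)
    (hn : 2 ≤ n) (hψ : ψ (root g) = of _ (root g) + root (X ^ n : (AdjoinRoot g)[X]))
    (hθx : θ (MvPolynomial.X 0) = of _ (MvPolynomial.X 0))
    (hθy : θ (MvPolynomial.X 1) = of _ (MvPolynomial.X 1) +
      of _ (MvPolynomial.X 0) * root (X ^ n : (MvPolynomial (Fin 2) k)[X]))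
    (hγε : ∀ r, γε (of _ r) = of _ (γ r))
    (hγεe : γε (root (X ^ n : (MvPolynomial (Fin 2) k)[X])) = root (X ^ n : (AdjoinRoot g)[X]))
    (h : ∀ q, ψ (γ q) = γε (θ q)) :
    ∃ a b : L, γ (MvPolynomial.X 0) = algebraMap L _ a ∧
      γ (MvPolynomial.X 1) = algebraMap L _ b + algebraMap L _ a * root g := by
  have hx := h (MvPolynomial.X 0)
  rw [hθx, hγε] at hx
  obtain ⟨a, ha⟩ := exists_eq_algebraMap_add_mul_root hg hgn hn ψ hψ (w := 0)
    (by rw [hx, map_zero, zero_mul, add_zero])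
  rw [zero_mul, add_zero] at ha
  have hy := h (MvPolynomial.X 1)
  rw [hθy, map_add, map_mul, hγε, hγε, hγεe] at hy
  obtain ⟨b, hb⟩ := exists_eq_algebraMap_add_mul_root hg hgn hn ψ hψ hy
  exact ⟨a, b, ha, by rw [hb, ha]⟩

theorem equivariant_of_image_X (hψ : ψ (root g) = of _ (root g) + root (X ^ n : (AdjoinRoot g)[X]))
    (hθx : θ (MvPolynomial.X 0) = of _ (MvPolynomial.X 0))
    (hθy : θ (MvPolynomial.X 1) = of _ (MvPolynomial.X 1) +
      of _ (MvPolynomial.X 0) * root (X ^ n : (MvPolynomial (Fin 2) k)[X]))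
    (hγε : ∀ r, γε (of _ r) = of _ (γ r))
    (hγεe : γε (root (X ^ n : (MvPolynomial (Fin 2) k)[X])) = root (X ^ n : (AdjoinRoot g)[X]))
    {a b : L} (ha : γ (MvPolynomial.X 0) = algebraMap L _ a)
    (hb : γ (MvPolynomial.X 1) = algebraMap L _ b + algebraMap L _ a * root g)
    (q : MvPolynomial (Fin 2) k) :
    ψ (γ q) = γε (θ q) := by
  have hψL (c : L) : ψ (algebraMap L _ c) = of _ (algebraMap L _ c) := ψ.commutes c
  have hX : ∀ i, ψ (γ (MvPolynomial.X i)) = γε (θ (MvPolynomial.X i)) := by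
    refine Fin.forall_fin_two.mpr ⟨?_, ?_⟩
    · rw [hθx, hγε, ha, hψL]
    · rw [hθy, map_add, map_mul, hγε, hγε, hγεe, hb, ha, map_add, map_mul, hψ, hψL, hψL, map_add,
        map_mul]
      ring
  induction q using MvPolynomial.induction_on with
  | C c =>
    have hγC : γ (MvPolynomial.C c) = algebraMap L _ (algebraMap k L c) := γ.commutes c
    have hθC : θ (MvPolynomial.C c) = of _ (MvPolynomial.C c) := θ.commutes c
    rw [hθC, hγε, hγC, hψL]
  | add q r hq hr => simp only [map_add, hq, hr]
  | mul_X q i hq => simp only [map_mul, hq, hX]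

end Equivariant

end AdjoinRoot

theorem stmt15_general (p : ℕ) [Fact p.Prime] (k : Type*) [Field k]
    (f : LaurentSeries k)
    (γ : MvPolynomial (Fin 2) k →ₐ[k]
      AdjoinRoot ((X : (LaurentSeries k)[X]) ^ p - C f))
    (ψ : AdjoinRoot ((X : (LaurentSeries k)[X]) ^ p - C f) →ₐ[LaurentSeries k]
      AdjoinRoot ((X : (AdjoinRoot ((X : (LaurentSeries k)[X]) ^ p - C f))[X]) ^ p))
    (hψ : ψ (AdjoinRoot.root ((X : (LaurentSeries k)[X]) ^ p - C f)) =
      AdjoinRoot.of _ (AdjoinRoot.root ((X : (LaurentSeries k)[X]) ^ p - C f)) +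
        AdjoinRoot.root ((X : (AdjoinRoot ((X : (LaurentSeries k)[X]) ^ p - C f))[X]) ^ p))
    (θ : MvPolynomial (Fin 2) k →ₐ[k]
      AdjoinRoot ((X : (MvPolynomial (Fin 2) k)[X]) ^ p))
    (hθx : θ (MvPolynomial.X 0) = AdjoinRoot.of _ (MvPolynomial.X 0))
    (hθy : θ (MvPolynomial.X 1) =
      AdjoinRoot.of _ (MvPolynomial.X 1) +
        AdjoinRoot.of _ (MvPolynomial.X 0) *
          AdjoinRoot.root ((X : (MvPolynomial (Fin 2) k)[X]) ^ p))
    (γε : AdjoinRoot ((X : (MvPolynomial (Fin 2) k)[X]) ^ p) →+*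
      AdjoinRoot ((X : (AdjoinRoot ((X : (LaurentSeries k)[X]) ^ p - C f))[X]) ^ p))
    (hγε : ∀ r : MvPolynomial (Fin 2) k, γε (AdjoinRoot.of _ r) = AdjoinRoot.of _ (γ r))
    (hγεe : γε (AdjoinRoot.root ((X : (MvPolynomial (Fin 2) k)[X]) ^ p)) =
      AdjoinRoot.root ((X : (AdjoinRoot ((X : (LaurentSeries k)[X]) ^ p - C f))[X]) ^ p)) :
    (∀ q : MvPolynomial (Fin 2) k, ψ (γ q) = γε (θ q)) ↔
      ∃ a b : LaurentSeries k,
        γ (MvPolynomial.X 0) =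
          algebraMap (LaurentSeries k)
            (AdjoinRoot ((X : (LaurentSeries k)[X]) ^ p - C f)) a ∧
        γ (MvPolynomial.X 1) =
          algebraMap (LaurentSeries k)
              (AdjoinRoot ((X : (LaurentSeries k)[X]) ^ p - C f)) b +
            algebraMap (LaurentSeries k)
                (AdjoinRoot ((X : (LaurentSeries k)[X]) ^ p - C f)) a *
              AdjoinRoot.root ((X : (LaurentSeries k)[X]) ^ p - C f) := by
  have hp : 2 ≤ p := (Fact.out : p.Prime).two_le
  have hg : ((X : (LaurentSeries k)[X]) ^ p - C f).Monic := monic_X_pow_sub_C f (by omega)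
  exact ⟨AdjoinRoot.exists_image_X_of_equivariant hg natDegree_X_pow_sub_C.le hp hψ hθx hθy hγε
    hγεe,
    fun ⟨_, _, ha, hb⟩ => AdjoinRoot.equivariant_of_image_X hψ hθx hθy hγε hγεe ha hb⟩

/-- Equivariance criterion.  Let `K = k((t))[z]/(z^p − f)` with the `α_p`-coaction
`ψ : K → K[ε]/(ε^p)`, `z ↦ z + ε`, and let `k[x,y]` carry the coaction `θ` with
`x ↦ x`, `y ↦ y + x ε`; let `γε` be the map `k[x,y][ε]/(ε^p) → K[ε]/(ε^p)` induced by a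
`k`-algebra map `γ : k[x,y] → K` with `ε ↦ ε`.  Then `γ` is equivariant, i.e.
`ψ ∘ γ = γε ∘ θ`, iff there are `a, b ∈ k((t))` with `γ(x) = a` and `γ(y) = b + a·z`. -/
theorem stmt15 (p : ℕ) [Fact p.Prime] (k : Type*) [Field k] [CharP k p]
    (f : LaurentSeries k)
    (γ : MvPolynomial (Fin 2) k →ₐ[k]
      AdjoinRoot ((X : (LaurentSeries k)[X]) ^ p - C f))
    (ψ : AdjoinRoot ((X : (LaurentSeries k)[X]) ^ p - C f) →ₐ[LaurentSeries k]
      AdjoinRoot ((X : (AdjoinRoot ((X : (LaurentSeries k)[X]) ^ p - C f))[X]) ^ p))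
    (hψ : ψ (AdjoinRoot.root ((X : (LaurentSeries k)[X]) ^ p - C f)) =
      AdjoinRoot.of _ (AdjoinRoot.root ((X : (LaurentSeries k)[X]) ^ p - C f)) +
        AdjoinRoot.root ((X : (AdjoinRoot ((X : (LaurentSeries k)[X]) ^ p - C f))[X]) ^ p))
    (θ : MvPolynomial (Fin 2) k →ₐ[k]
      AdjoinRoot ((X : (MvPolynomial (Fin 2) k)[X]) ^ p))
    (hθx : θ (MvPolynomial.X 0) = AdjoinRoot.of _ (MvPolynomial.X 0))
    (hθy : θ (MvPolynomial.X 1) =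
      AdjoinRoot.of _ (MvPolynomial.X 1) +
        AdjoinRoot.of _ (MvPolynomial.X 0) *
          AdjoinRoot.root ((X : (MvPolynomial (Fin 2) k)[X]) ^ p))
    (γε : AdjoinRoot ((X : (MvPolynomial (Fin 2) k)[X]) ^ p) →+*
      AdjoinRoot ((X : (AdjoinRoot ((X : (LaurentSeries k)[X]) ^ p - C f))[X]) ^ p))
    (hγε : ∀ r : MvPolynomial (Fin 2) k, γε (AdjoinRoot.of _ r) = AdjoinRoot.of _ (γ r))
    (hγεe : γε (AdjoinRoot.root ((X : (MvPolynomial (Fin 2) k)[X]) ^ p)) =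
      AdjoinRoot.root ((X : (AdjoinRoot ((X : (LaurentSeries k)[X]) ^ p - C f))[X]) ^ p)) :
    (∀ q : MvPolynomial (Fin 2) k, ψ (γ q) = γε (θ q)) ↔
      ∃ a b : LaurentSeries k,
        γ (MvPolynomial.X 0) =
          algebraMap (LaurentSeries k)
            (AdjoinRoot ((X : (LaurentSeries k)[X]) ^ p - C f)) a ∧
        γ (MvPolynomial.X 1) =
          algebraMap (LaurentSeries k)
              (AdjoinRoot ((X : (LaurentSeries k)[X]) ^ p - C f)) b +
            algebraMap (LaurentSeries k)
                (AdjoinRoot ((X : (LaurentSeries k)[X]) ^ p - C f)) a *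
              AdjoinRoot.root ((X : (LaurentSeries k)[X]) ^ p - C f) :=
  stmt15_general p k f γ ψ hψ θ hθx hθy γε hγε hγεe
end
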